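/- arXiv:1211.3454 — 6 statements merged into one kernel-verified Lean document; each statement's English description precedes it below -/
import Mathlib

section
/- Let v₁,…,v_l ∈ V and w₁,…,w_l ∈ W be vectors in real inner product spaces such that the Gram determinants satisfy det((v_k,v_m)) ≥ 1 and det((w_k,w_m)) ≥ 1. Then |Σ_k v_k ⊗ w_k| ≥ √l, where the norm is taken in V ⊗ W with the tensor product inner product. -/
open scoped RealInnerProductSpace

/-- The Gram matrix of a finite family of vectors in a real inner product space. -/
noncomputable def gramMatrix {E : Type*} [NormedAddCommGroup E] [InnerProductSpace ℝ E]
    {ι : Type*} [Fintype ι] (v : ι → E) : Matrix ι ι ℝ :=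
  Matrix.of fun i j => ⟪v i, v j⟫

open Matrix in
lemma trace_eq_sum_eigs {n : ℕ} {A : Matrix (Fin n) (Fin n) ℝ} (hA : A.IsHermitian) :
    A.trace = ∑ i, hA.eigenvalues i := by
  have h := hA.spectral_theorem
  calc A.trace = ((hA.eigenvectorUnitary : Matrix (Fin n) (Fin n) ℝ) *
        (Matrix.diagonal (RCLike.ofReal ∘ hA.eigenvalues) *
        (star hA.eigenvectorUnitary : Matrix (Fin n) (Fin n) ℝ))).trace := by
        rw [← Matrix.mul_assoc]; exact congrArg Matrix.trace h
    _ = (Matrix.diagonal (RCLike.ofReal ∘ hA.eigenvalues)).trace := by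
        rw [Matrix.trace_mul_comm, Matrix.mul_assoc,
          (Matrix.mem_unitaryGroup_iff').mp hA.eigenvectorUnitary.2, Matrix.mul_one]
    _ = ∑ i, hA.eigenvalues i := by simp [Matrix.trace_diagonal]

open Matrix in
lemma trace_psd_ge {n : ℕ} {C : Matrix (Fin n) (Fin n) ℝ} (hC : C.PosSemidef)
    (hdet : 1 ≤ C.det) : (n : ℝ) ≤ C.trace := by
  rcases Nat.eq_zero_or_pos n with h0 | hn
  · subst h0; simp [Matrix.trace]
  have hev : ∀ i, 0 ≤ hC.1.eigenvalues i := hC.eigenvalues_nonneg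
  have hprod : (1 : ℝ) ≤ ∏ i, hC.1.eigenvalues i := by
    have h := hdet
    rw [hC.1.det_eq_prod_eigenvalues] at h
    exact_mod_cast h
  have hnpos : (0 : ℝ) < n := by exact_mod_cast hn
  have hw : ∑ _i : Fin n, (1 / (n:ℝ)) = 1 := by
    simp [Finset.sum_const, mul_comm]
    field_simp
  have hAMGM := Real.geom_mean_le_arith_mean_weighted Finset.univ
    (fun _ => 1 / (n:ℝ)) hC.1.eigenvalues (fun i _ => by positivity) hw
    (fun i _ => hev i)
  have hgeom : (1 : ℝ) ≤ ∏ i, hC.1.eigenvalues i ^ (1 / (n:ℝ)) := by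
    rw [Real.finset_prod_rpow _ _ (fun i _ => hev i)]
    calc (1:ℝ) = (1:ℝ) ^ (1 / (n:ℝ)) := (Real.one_rpow _).symm
    _ ≤ (∏ i, hC.1.eigenvalues i) ^ (1 / (n:ℝ)) :=
        Real.rpow_le_rpow zero_le_one hprod (by positivity)
  have : (1 : ℝ) ≤ ∑ i, (1 / (n:ℝ)) * hC.1.eigenvalues i := le_trans hgeom hAMGM
  rw [trace_eq_sum_eigs hC.1]
  calc (n : ℝ) = n * 1 := (mul_one _).symm
  _ ≤ n * ∑ i, (1 / (n:ℝ)) * hC.1.eigenvalues i := by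
      exact mul_le_mul_of_nonneg_left this hnpos.le
  _ = ∑ i, hC.1.eigenvalues i := by
      rw [Finset.mul_sum]
      congr 1; ext i; field_simp

open Matrix in
lemma gram_posSemidef {E : Type*} [NormedAddCommGroup E] [InnerProductSpace ℝ E]
    {n : ℕ} (v : Fin n → E) : (gramMatrix v).PosSemidef := by
  refine Matrix.PosSemidef.of_dotProduct_mulVec_nonneg ?_ ?_
  · ext i j
    simp [gramMatrix, Matrix.conjTranspose_apply, real_inner_comm]
  · intro x
    have : dotProduct (star x) (gramMatrix v *ᵥ x)
        = ⟪∑ i, x i • v i, ∑ j, x j • v j⟫ := by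
      rw [sum_inner]
      simp only [inner_sum, real_inner_smul_left, real_inner_smul_right,
        dotProduct, Matrix.mulVec, gramMatrix, Matrix.of_apply,
        Pi.star_apply, star_trivial, starRingEnd_apply, Finset.mul_sum]
      exact Finset.sum_congr rfl fun i _ => Finset.sum_congr rfl fun j _ => by ring
    rw [this]
    exact real_inner_self_nonneg

open scoped MatrixOrder in
lemma trace_mul_ge {n : ℕ} {A B : Matrix (Fin n) (Fin n) ℝ}
    (hA : A.PosSemidef) (hB : B.PosSemidef) (hdA : 1 ≤ A.det) (hdB : 1 ≤ B.det) :
    (n : ℝ) ≤ (A * B).trace := by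
  set S := CFC.sqrt A with hS
  have hSh : S.IsHermitian := (Matrix.nonneg_iff_posSemidef.mp (CFC.sqrt_nonneg A)).1
  have hC : (S * B * S).PosSemidef := by
    have := hB.mul_mul_conjTranspose_same S
    rwa [hSh.eq] at this
  have hdetS : S.det * S.det = A.det := by
    rw [← Matrix.det_mul, CFC.sqrt_mul_sqrt_self A hA.nonneg]
  have hdC : 1 ≤ (S * B * S).det := by
    rw [Matrix.det_mul, Matrix.det_mul]
    calc (1:ℝ) ≤ A.det * B.det := one_le_mul_of_one_le_of_one_le hdA hdB
    _ = S.det * B.det * S.det := by rw [← hdetS]; ring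
  have := trace_psd_ge hC hdC
  rwa [Matrix.trace_mul_cycle, CFC.sqrt_mul_sqrt_self A hA.nonneg] at this


/-- If `v₁, …, v_l ∈ V` and `w₁, …, w_l ∈ W` have Gram determinants at least `1`,
then `|Σ_k v_k ⊗ w_k| ≥ √l` in `V ⊗ W` (realized by a bilinear map `t` into an inner
product space `G` with `⟪t v w, t v' w'⟫ = ⟪v,v'⟫⟪w,w'⟫` and spanning image). -/
theorem norm_sum_tmul_ge_sqrt
    {V W G : Type*} [NormedAddCommGroup V] [InnerProductSpace ℝ V]
    [NormedAddCommGroup W] [InnerProductSpace ℝ W]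
    [NormedAddCommGroup G] [InnerProductSpace ℝ G]
    [FiniteDimensional ℝ V] [FiniteDimensional ℝ W]
    (t : V →ₗ[ℝ] W →ₗ[ℝ] G)
    (ht : ∀ (v v' : V) (w w' : W), ⟪t v w, t v' w'⟫ = ⟪v, v'⟫ * ⟪w, w'⟫)
    (htspan : Submodule.span ℝ (Set.image2 (fun v w => t v w) Set.univ Set.univ) = ⊤)
    (l : ℕ) (v : Fin l → V) (w : Fin l → W)
    (hv : 1 ≤ (gramMatrix v).det) (hw : 1 ≤ (gramMatrix w).det) :
    Real.sqrt l ≤ ‖∑ k, t (v k) (w k)‖ := by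
  have h1 : ‖∑ k, t (v k) (w k)‖ ^ 2 = (gramMatrix v * gramMatrix w).trace := by
    rw [← real_inner_self_eq_norm_sq, sum_inner]
    simp only [inner_sum, ht]
    rw [Matrix.trace]
    simp only [Matrix.diag_apply, Matrix.mul_apply, gramMatrix, Matrix.of_apply]
    exact Finset.sum_congr rfl fun i _ => Finset.sum_congr rfl fun j _ => by
      rw [real_inner_comm (w j) (w i)]
  have key : (l : ℝ) ≤ ‖∑ k, t (v k) (w k)‖ ^ 2 := by
    rw [h1]
    exact trace_mul_ge (gram_posSemidef v) (gram_posSemidef w) hv hw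
  calc Real.sqrt l ≤ Real.sqrt (‖∑ k, t (v k) (w k)‖ ^ 2) := Real.sqrt_le_sqrt key
  _ = ‖∑ k, t (v k) (w k)‖ := Real.sqrt_sq (norm_nonneg _)
end

section
/- For vectors v₁, v₂ ∈ V and w₁, w₂ ∈ W in real inner product spaces, if |v₁|,|v₂|,|w₁|,|w₂| ≥ 1 and every pair among {v₁,v₂} and {w₁,w₂} that is linearly independent spans a parallelogram of area at least 1, and v₁⊗w₁, v₂⊗w₂ are linearly independent in V⊗W, then the area of the parallelogram spanned by v₁⊗w₁ and v₂⊗w₂ in V⊗W is at least 1. -/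
open scoped RealInnerProductSpace

/-- The squared area `|x ∧ y|² = |x|²|y|² − (x,y)²` of the parallelogram spanned by two
vectors in a real inner product space. -/
noncomputable def wedgeSq {E : Type*} [NormedAddCommGroup E] [InnerProductSpace ℝ E]
    (x y : E) : ℝ :=
  ‖x‖ ^ 2 * ‖y‖ ^ 2 - ⟪x, y⟫ ^ 2

private lemma exists_smul_of_not_li {E : Type*} [AddCommGroup E] [Module ℝ E]
    {x y : E} (hx : x ≠ 0) (h : ¬ LinearIndependent ℝ ![x, y]) : ∃ c : ℝ, y = c • x := by
  rw [LinearIndependent.pair_iff] at h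
  push_neg at h
  obtain ⟨s, u, heq, hne⟩ := h
  by_cases hu : u = 0
  · subst hu
    simp only [smul_zero, zero_smul, add_zero] at heq
    have hs : s ≠ 0 := fun hs => hne hs rfl
    exact absurd (by simpa [hs] using smul_eq_zero.mp heq) hx
  · refine ⟨-s / u, ?_⟩
    have h2 : u • y = -(s • x) := by rwa [add_comm, add_eq_zero_iff_eq_neg] at heq
    calc y = u⁻¹ • (u • y) := (inv_smul_smul₀ hu y).symm
      _ = u⁻¹ • ((-s) • x) := by rw [h2, neg_smul]
      _ = (-s / u) • x := by rw [smul_smul, div_eq_inv_mul]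

/-- If `|v₁|,|v₂|,|w₁|,|w₂| ≥ 1`, every linearly independent pair among `{v₁,v₂}` and
`{w₁,w₂}` spans a parallelogram of area at least `1`, and `v₁⊗w₁, v₂⊗w₂` are linearly
independent, then `v₁⊗w₁` and `v₂⊗w₂` span a parallelogram of area at least `1`.
`V ⊗ W` is realized by a bilinear map `t` with `⟪t v w, t v' w'⟫ = ⟪v,v'⟫⟪w,w'⟫` and
spanning image. -/
theorem area_tmul_ge_one
    {V W G : Type*} [NormedAddCommGroup V] [InnerProductSpace ℝ V]
    [NormedAddCommGroup W] [InnerProductSpace ℝ W]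
    [NormedAddCommGroup G] [InnerProductSpace ℝ G]
    [FiniteDimensional ℝ V] [FiniteDimensional ℝ W]
    (t : V →ₗ[ℝ] W →ₗ[ℝ] G)
    (ht : ∀ (v v' : V) (w w' : W), ⟪t v w, t v' w'⟫ = ⟪v, v'⟫ * ⟪w, w'⟫)
    (htspan : Submodule.span ℝ (Set.image2 (fun v w => t v w) Set.univ Set.univ) = ⊤)
    (v₁ v₂ : V) (w₁ w₂ : W)
    (hv₁ : 1 ≤ ‖v₁‖) (hv₂ : 1 ≤ ‖v₂‖) (hw₁ : 1 ≤ ‖w₁‖) (hw₂ : 1 ≤ ‖w₂‖)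
    (hv : LinearIndependent ℝ ![v₁, v₂] → 1 ≤ Real.sqrt (wedgeSq v₁ v₂))
    (hw : LinearIndependent ℝ ![w₁, w₂] → 1 ≤ Real.sqrt (wedgeSq w₁ w₂))
    (hind : LinearIndependent ℝ ![t v₁ w₁, t v₂ w₂]) :
    1 ≤ Real.sqrt (wedgeSq (t v₁ w₁) (t v₂ w₂)) := by
  have hv₁0 : v₁ ≠ 0 := fun h => by simp [h] at hv₁; linarith
  have hw₁0 : w₁ ≠ 0 := fun h => by simp [h] at hw₁; linarith
  -- key identity
  have hT : wedgeSq (t v₁ w₁) (t v₂ w₂)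
      = ‖v₁‖ ^ 2 * ‖v₂‖ ^ 2 * (‖w₁‖ ^ 2 * ‖w₂‖ ^ 2) - ⟪v₁, v₂⟫ ^ 2 * ⟪w₁, w₂⟫ ^ 2 := by
    unfold wedgeSq
    rw [← real_inner_self_eq_norm_sq (t v₁ w₁), ← real_inner_self_eq_norm_sq (t v₂ w₂),
      ht, ht, ht, real_inner_self_eq_norm_sq, real_inner_self_eq_norm_sq,
      real_inner_self_eq_norm_sq, real_inner_self_eq_norm_sq]
    ring
  have sqrt_conv : ∀ s : ℝ, 1 ≤ Real.sqrt s → 1 ≤ s := fun s h => Real.one_le_sqrt.mp h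
  rw [Real.one_le_sqrt, hT]
  have hC2 : ⟪w₁, w₂⟫ ^ 2 ≤ ‖w₁‖ ^ 2 * ‖w₂‖ ^ 2 := by
    have := abs_real_inner_le_norm w₁ w₂
    nlinarith [abs_nonneg ⟪w₁, w₂⟫, sq_abs ⟪w₁, w₂⟫]
  have hA : 1 ≤ ‖v₁‖ ^ 2 * ‖v₂‖ ^ 2 := by
    have h := mul_le_mul hv₁ hv₂ zero_le_one (le_trans zero_le_one hv₁)
    nlinarith [norm_nonneg v₁, norm_nonneg v₂]
  have hB : 1 ≤ ‖w₁‖ ^ 2 * ‖w₂‖ ^ 2 := by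
    have h := mul_le_mul hw₁ hw₂ zero_le_one (le_trans zero_le_one hw₁)
    nlinarith [norm_nonneg w₁, norm_nonneg w₂]
  by_cases hvi : LinearIndependent ℝ ![v₁, v₂]
  · have h1 : 1 ≤ wedgeSq v₁ v₂ := sqrt_conv _ (hv hvi)
    unfold wedgeSq at h1
    by_cases hwi : LinearIndependent ℝ ![w₁, w₂]
    · have h2 : 1 ≤ wedgeSq w₁ w₂ := sqrt_conv _ (hw hwi)
      unfold wedgeSq at h2
      have key1 : 0 ≤ (‖v₁‖ ^ 2 * ‖v₂‖ ^ 2 - ⟪v₁, v₂⟫ ^ 2 - 1) * (‖w₁‖ ^ 2 * ‖w₂‖ ^ 2) :=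
        mul_nonneg (by linarith) (by positivity)
      have key2 : 0 ≤ ⟪v₁, v₂⟫ ^ 2 * (‖w₁‖ ^ 2 * ‖w₂‖ ^ 2 - ⟪w₁, w₂⟫ ^ 2) :=
        mul_nonneg (sq_nonneg _) (by linarith)
      nlinarith [key1, key2, hB]
    · -- w pair dependent
      obtain ⟨c, hc⟩ := exists_smul_of_not_li hw₁0 hwi
      have hq : ⟪w₁, w₂⟫ ^ 2 = ‖w₁‖ ^ 2 * ‖w₂‖ ^ 2 := by
        rw [hc, real_inner_smul_right, norm_smul, real_inner_self_eq_norm_sq,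
          mul_pow, mul_pow, Real.norm_eq_abs, sq_abs]
        ring
      rw [hq]
      have key1 : 0 ≤ (‖v₁‖ ^ 2 * ‖v₂‖ ^ 2 - ⟪v₁, v₂⟫ ^ 2 - 1) * (‖w₁‖ ^ 2 * ‖w₂‖ ^ 2) :=
        mul_nonneg (by linarith) (by positivity)
      nlinarith [key1, hB]
  · -- v pair dependent
    obtain ⟨c, hc⟩ := exists_smul_of_not_li hv₁0 hvi
    have hp : ⟪v₁, v₂⟫ ^ 2 = ‖v₁‖ ^ 2 * ‖v₂‖ ^ 2 := by
      rw [hc, real_inner_smul_right, norm_smul, real_inner_self_eq_norm_sq,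
        mul_pow, mul_pow, Real.norm_eq_abs, sq_abs]
      ring
    have hwi : LinearIndependent ℝ ![w₁, w₂] := by
      by_contra hwi
      obtain ⟨d, hd⟩ := exists_smul_of_not_li hw₁0 hwi
      have htt : t v₂ w₂ = (c * d) • t v₁ w₁ := by
        rw [hc, hd]
        simp [map_smul, LinearMap.smul_apply, smul_smul, mul_comm]
      rw [LinearIndependent.pair_iff] at hind
      have := hind (c * d) (-1) (by rw [htt]; module)
      exact absurd this.2 (by norm_num)
    have h2 : 1 ≤ wedgeSq w₁ w₂ := sqrt_conv _ (hw hwi)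
    unfold wedgeSq at h2
    rw [hp]
    have key2 : 0 ≤ (‖v₁‖ ^ 2 * ‖v₂‖ ^ 2) * (‖w₁‖ ^ 2 * ‖w₂‖ ^ 2 - ⟪w₁, w₂⟫ ^ 2 - 1) :=
      mul_nonneg (by linarith) (by linarith)
    nlinarith [key2, hA]
end

section
/- Let v₁,v₂,v₃ ∈ V and w₁,w₂,w₃ ∈ W be vectors in real inner product spaces, and set α_i = v_i ⊗ w_i ∈ V⊗W. Then the 3×3 Gram determinant of (α₁,α₂,α₃) satisfies the 18-term identity: |α₁∧α₂∧α₃|² = |v₁|²|v₂|²|v₃|²·G_w + G_v·|w₁|²|w₂|²|w₃|² − (1/2)Σ_{i=1}^3 λ_i² μ_i² + (1/2)Σ_{i≠j} λ_i² μ_j² − (1/2)Σ_{i=1}^3 λ_i² G_w − (1/2)Σ_{i=1}^3 G_v μ_i² + (1/2) G_v G_w, where λ_i² = |v_i|²·|v_{i'}∧v_{i''}|², μ_i² = |w_i|²·|w_{i'}∧w_{i''}|², G_v = |v₁∧v₂∧v₃|², G_w = |w₁∧w₂∧w₃|². -/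
open scoped RealInnerProductSpace BigOperators

/-- The 3×3 Gram determinant `|x ∧ y ∧ z|²`. -/
noncomputable def gramDet3 {E : Type*} [NormedAddCommGroup E] [InnerProductSpace ℝ E]
    (x y z : E) : ℝ :=
  Matrix.det !![⟪x, x⟫, ⟪x, y⟫, ⟪x, z⟫; ⟪y, x⟫, ⟪y, y⟫, ⟪y, z⟫; ⟪z, x⟫, ⟪z, y⟫, ⟪z, z⟫]

/-- `λᵢ² = |vᵢ|² |v_{i'} ∧ v_{i''}|²` where `{i',i''}` are the indices complementary
to `i` in `{0,1,2}` (realized by `i+1`, `i+2` in `Fin 3`). -/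
noncomputable def lamSq {E : Type*} [NormedAddCommGroup E] [InnerProductSpace ℝ E]
    (v : Fin 3 → E) (i : Fin 3) : ℝ :=
  ‖v i‖ ^ 2 * wedgeSq (v (i + 1)) (v (i + 2))

lemma det_fin_three_of' {R : Type*} [CommRing R] (a b c d e f g h i : R) :
    Matrix.det !![a, b, c; d, e, f; g, h, i] =
      a * e * i - a * f * h - b * d * i + b * f * g + c * d * h - c * e * g := by
  rw [Matrix.det_fin_three]
  simp [Matrix.cons_val_zero, Matrix.cons_val_one]

set_option maxHeartbeats 4000000 in
/-- The 18-term identity for the 3×3 Gram determinant of `αᵢ = vᵢ ⊗ wᵢ` in `V ⊗ W`,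
where `V ⊗ W` is realized by a bilinear map `t` with `⟪t v w, t v' w'⟫ = ⟪v,v'⟫⟪w,w'⟫`
and spanning image. -/
theorem gramDet3_tmul_eighteen_terms
    {V W G : Type*} [NormedAddCommGroup V] [InnerProductSpace ℝ V]
    [NormedAddCommGroup W] [InnerProductSpace ℝ W]
    [NormedAddCommGroup G] [InnerProductSpace ℝ G]
    [FiniteDimensional ℝ V] [FiniteDimensional ℝ W]
    (t : V →ₗ[ℝ] W →ₗ[ℝ] G)
    (ht : ∀ (v v' : V) (w w' : W), ⟪t v w, t v' w'⟫ = ⟪v, v'⟫ * ⟪w, w'⟫)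
    (htspan : Submodule.span ℝ (Set.image2 (fun v w => t v w) Set.univ Set.univ) = ⊤)
    (v : Fin 3 → V) (w : Fin 3 → W) :
    gramDet3 (t (v 0) (w 0)) (t (v 1) (w 1)) (t (v 2) (w 2)) =
      ‖v 0‖ ^ 2 * ‖v 1‖ ^ 2 * ‖v 2‖ ^ 2 * gramDet3 (w 0) (w 1) (w 2)
        + gramDet3 (v 0) (v 1) (v 2) * (‖w 0‖ ^ 2 * ‖w 1‖ ^ 2 * ‖w 2‖ ^ 2)
        - (1 / 2) * ∑ i, lamSq v i * lamSq w i
        + (1 / 2) * ∑ i, ∑ j ∈ Finset.univ \ {i}, lamSq v i * lamSq w j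
        - (1 / 2) * ∑ i, lamSq v i * gramDet3 (w 0) (w 1) (w 2)
        - (1 / 2) * ∑ i, gramDet3 (v 0) (v 1) (v 2) * lamSq w i
        + (1 / 2) * (gramDet3 (v 0) (v 1) (v 2) * gramDet3 (w 0) (w 1) (w 2)) := by
  simp only [gramDet3, lamSq, wedgeSq, det_fin_three_of', Finset.sum_sdiff_eq_sub
      (Finset.subset_univ _), Finset.sum_singleton, Fin.sum_univ_three]
  simp only [show ((0:Fin 3)+1) = 1 by decide, show ((0:Fin 3)+2) = 2 by decide,
    show ((1:Fin 3)+1) = 2 by decide, show ((1:Fin 3)+2) = 0 by decide,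
    show ((2:Fin 3)+1) = 0 by decide, show ((2:Fin 3)+2) = 1 by decide]
  simp only [ht, ← real_inner_self_eq_norm_sq, real_inner_comm (v 1) (v 0),
    real_inner_comm (v 2) (v 0), real_inner_comm (v 2) (v 1), real_inner_comm (w 1) (w 0),
    real_inner_comm (w 2) (w 0), real_inner_comm (w 2) (w 1)]
  ring
end

section
/- Let v₁, v₂, v₃ be vectors lying in a 2-dimensional real inner product space (all nonzero, no two proportional), with θ_i the angle between v_{i'} and v_{i''}, arranged so that θ_i = θ_{i'} + θ_{i''} for some index i. Set λ_j = |v_j|·|v_{j'}∧v_{j''}|. Then λ_i² − λ_{i'}² − λ_{i''}² = ±2 λ_{i'} λ_{i''} cos θ_i. -/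
open scoped RealInnerProductSpace

/-- The area `|x ∧ y| = √(|x|²|y|² − (x,y)²)` of the parallelogram spanned by `x, y`. -/
noncomputable def wedgeNorm {E : Type*} [NormedAddCommGroup E] [InnerProductSpace ℝ E]
    (x y : E) : ℝ :=
  Real.sqrt (‖x‖ ^ 2 * ‖y‖ ^ 2 - ⟪x, y⟫ ^ 2)

lemma wedgeNorm_eq {E : Type*} [NormedAddCommGroup E] [InnerProductSpace ℝ E] (x y : E) :
    wedgeNorm x y = Real.sin (InnerProductGeometry.angle x y) * (‖x‖ * ‖y‖) := by
  rw [wedgeNorm, InnerProductGeometry.sin_angle_mul_norm_mul_norm]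
  congr 1
  rw [real_inner_self_eq_norm_sq, real_inner_self_eq_norm_sq]
  ring

/-- Let `v₁, v₂, v₃` be nonzero, pairwise non-proportional vectors in a 2-dimensional real
inner product space, with `θᵢ` the angle between `v_{i'}` and `v_{i''}` (complementary
indices realized as `i+1`, `i+2` in `Fin 3`), and `λⱼ = |vⱼ| · |v_{j'} ∧ v_{j''}|`.
If `θᵢ = θ_{i'} + θ_{i''}` for an index `i`, then
`λᵢ² − λ_{i'}² − λ_{i''}² = ± 2 λ_{i'} λ_{i''} cos θᵢ`. -/
theorem lamSq_relation {E : Type*} [NormedAddCommGroup E] [InnerProductSpace ℝ E]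
    (hdim : Module.finrank ℝ E = 2) (v : Fin 3 → E)
    (hne : ∀ i, v i ≠ 0)
    (hprop : ∀ i j, i ≠ j → LinearIndependent ℝ ![v i, v j])
    (θ : Fin 3 → ℝ)
    (hθ : ∀ i, θ i = InnerProductGeometry.angle (v (i + 1)) (v (i + 2)))
    (lam : Fin 3 → ℝ)
    (hlam : ∀ j, lam j = ‖v j‖ * wedgeNorm (v (j + 1)) (v (j + 2)))
    (i : Fin 3) (hsum : θ i = θ (i + 1) + θ (i + 2)) :
    lam i ^ 2 - lam (i + 1) ^ 2 - lam (i + 2) ^ 2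
        = 2 * lam (i + 1) * lam (i + 2) * Real.cos (θ i)
      ∨ lam i ^ 2 - lam (i + 1) ^ 2 - lam (i + 2) ^ 2
        = -(2 * lam (i + 1) * lam (i + 2) * Real.cos (θ i)) := by
  left
  have e1 : i + 1 + 1 = i + 2 := by fin_cases i <;> decide
  have e2 : i + 1 + 2 = i := by fin_cases i <;> decide
  have e3 : i + 2 + 1 = i := by fin_cases i <;> decide
  have e4 : i + 2 + 2 = i + 1 := by fin_cases i <;> decide
  set P : ℝ := ‖v i‖ * ‖v (i + 1)‖ * ‖v (i + 2)‖ with hP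
  have l0 : lam i = P * Real.sin (θ i) := by
    rw [hlam, wedgeNorm_eq, ← hθ, hP]; ring
  have t1 : θ (i + 1) = InnerProductGeometry.angle (v (i + 2)) (v i) := by
    rw [hθ (i + 1), e1, e2]
  have t2 : θ (i + 2) = InnerProductGeometry.angle (v i) (v (i + 1)) := by
    rw [hθ (i + 2), e3, e4]
  have l1 : lam (i + 1) = P * Real.sin (θ (i + 1)) := by
    rw [hlam, e1, e2, wedgeNorm_eq, ← t1, hP]; ring
  have l2 : lam (i + 2) = P * Real.sin (θ (i + 2)) := by
    rw [hlam, e3, e4, wedgeNorm_eq, ← t2, hP]; ring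
  rw [l0, l1, l2, hsum, Real.sin_add, Real.cos_add]
  linear_combination (P ^ 2 * Real.sin (θ (i + 1)) ^ 2) * Real.sin_sq_add_cos_sq (θ (i + 2))
    + (P ^ 2 * Real.sin (θ (i + 2)) ^ 2) * Real.sin_sq_add_cos_sq (θ (i + 1))
end

section
/- In a 2-dimensional lattice S inside Euclidean space, there exists a basis α, β of S such that α is a shortest nonzero vector of S and the angle θ between α and β satisfies 60° ≤ θ ≤ 120°, i.e. |cos θ| ≤ 1/2; consequently |α∧β| ≥ (√3/2)|α||β|. -/
open scoped RealInnerProductSpace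

section Aux

set_option linter.unusedSectionVars false

variable {E : Type*} [NormedAddCommGroup E] [InnerProductSpace ℝ E]

lemma aux_range_two (b : Fin 2 → E) : Set.range b = {b 0, b 1} := by
  ext x
  simp [Fin.exists_fin_two, eq_comm]

lemma aux_finite (b : Fin 2 → E) (hb : LinearIndependent ℝ b) (R : ℝ) :
    {s : E | s ∈ Submodule.span ℤ (Set.range b) ∧ ‖s‖ ≤ R}.Finite := by
  classical
  set L : (Fin 2 → ℝ) →ₗ[ℝ] E :=
    LinearMap.lsum ℝ (fun _ ↦ ℝ) ℕ fun i ↦ LinearMap.id.smulRight (b i) with hL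
  have hker : LinearMap.ker L = ⊥ := Fintype.linearIndependent_iff'.mp hb
  obtain ⟨K, hK, hant⟩ := L.exists_antilipschitzWith hker
  set M : ℤ := ⌈(K : ℝ) * R⌉ with hM
  have hsub : {s : E | s ∈ Submodule.span ℤ (Set.range b) ∧ ‖s‖ ≤ R} ⊆
      (fun p : ℤ × ℤ => (p.1 : ℝ) • b 0 + (p.2 : ℝ) • b 1) ''
        (Set.Icc (-M) M ×ˢ Set.Icc (-M) M) := by
    rintro s ⟨hs, hsR⟩
    rw [aux_range_two, Submodule.mem_span_pair] at hs
    obtain ⟨m, n, hmn⟩ := hs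
    have hmn' : (m : ℝ) • b 0 + (n : ℝ) • b 1 = s := by
      rw [Int.cast_smul_eq_zsmul, Int.cast_smul_eq_zsmul]; exact hmn
    have hLc : L ![(m : ℝ), (n : ℝ)] = s := by
      simp [hL, Fin.sum_univ_two, hmn']
    have hnorm : ‖![(m : ℝ), (n : ℝ)]‖ ≤ K * R := by
      have := hant.le_mul_dist ![(m : ℝ), (n : ℝ)] 0
      simp only [map_zero, dist_zero_right, hLc] at this
      calc ‖![(m : ℝ), (n : ℝ)]‖ ≤ K * ‖s‖ := this
        _ ≤ K * R := by exact mul_le_mul_of_nonneg_left hsR (by positivity)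
    have h0 : |(m : ℝ)| ≤ K * R := by
      simpa using (norm_le_pi_norm ![(m : ℝ), (n : ℝ)] 0).trans hnorm
    have h1 : |(n : ℝ)| ≤ K * R := by
      simpa using (norm_le_pi_norm ![(m : ℝ), (n : ℝ)] 1).trans hnorm
    rw [abs_le] at h0 h1
    have hMR : (K : ℝ) * R ≤ (M : ℝ) := Int.le_ceil _
    refine ⟨(m, n), ⟨⟨?_, ?_⟩, ⟨?_, ?_⟩⟩, hmn'⟩ <;>
      rw [← @Int.cast_le ℝ] <;> push_cast <;> linarith [h0.1, h0.2, h1.1, h1.2]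
  exact Set.Finite.subset (((Set.finite_Icc _ _).prod (Set.finite_Icc _ _)).image _) hsub

lemma aux_min (b : Fin 2 → E) (hb : LinearIndependent ℝ b) (T : Set E)
    (hT : ∀ t ∈ T, t ∈ Submodule.span ℤ (Set.range b)) (hne : T.Nonempty) :
    ∃ t ∈ T, ∀ s ∈ T, ‖t‖ ≤ ‖s‖ := by
  obtain ⟨t0, ht0⟩ := hne
  have hfin : {s ∈ T | ‖s‖ ≤ ‖t0‖}.Finite :=
    (aux_finite b hb ‖t0‖).subset (fun s hs => ⟨hT s hs.1, hs.2⟩)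
  obtain ⟨t, ⟨htT, _⟩, hmin⟩ :=
    Set.exists_min_image _ (fun s => ‖s‖) hfin ⟨t0, ht0, le_refl _⟩
  refine ⟨t, htT, fun s hs => ?_⟩
  by_cases h : ‖s‖ ≤ ‖t0‖
  · exact hmin s ⟨hs, h⟩
  · exact (hmin t0 ⟨ht0, le_refl _⟩).trans (le_of_not_ge h)

end Aux

set_option maxHeartbeats 1600000 in
/-- In a rank-2 lattice `S` (spanned over ℤ by two ℝ-linearly independent vectors)
in a real inner product space, there is a basis `α, β` of `S`. -/
theorem exists_reduced_basis_rank_two {E : Type*} [NormedAddCommGroup E]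
    [InnerProductSpace ℝ E] (b : Fin 2 → E) (hb : LinearIndependent ℝ b)
    (S : Submodule ℤ E) (hS : S = Submodule.span ℤ (Set.range b)) :
    ∃ α β : E, α ∈ S ∧ β ∈ S ∧
      Submodule.span ℤ ({α, β} : Set E) = S ∧
      (∀ s ∈ S, s ≠ 0 → ‖α‖ ≤ ‖s‖) ∧
      |⟪α, β⟫| ≤ ‖α‖ * ‖β‖ / 2 ∧
      Real.sqrt 3 / 2 * (‖α‖ * ‖β‖) ≤ wedgeNorm α β := by
  classical
  subst hS
  set Sp := Submodule.span ℤ (Set.range b) with hSp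
  have hb0 : b 0 ∈ Sp := Submodule.subset_span ⟨0, rfl⟩
  have hb1 : b 1 ∈ Sp := Submodule.subset_span ⟨1, rfl⟩
  have hb0ne : b 0 ≠ 0 := hb.ne_zero 0
  have hb1ne : b 1 ≠ 0 := hb.ne_zero 1
  -- shortest nonzero vector α
  obtain ⟨α, ⟨hαS, hαne⟩, hαmin⟩ :=
    aux_min b hb {s | s ∈ Sp ∧ s ≠ 0} (fun t ht => ht.1) ⟨b 0, hb0, hb0ne⟩
  have hαpos : 0 < ‖α‖ := norm_pos_iff.mpr hαne
  -- shortest vector not a real multiple of α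
  set T2 : Set E := {s | s ∈ Sp ∧ ∀ t : ℝ, s ≠ t • α} with hT2
  have hT2ne : T2.Nonempty := by
    by_cases hc0 : ∃ t : ℝ, b 0 = t • α
    · obtain ⟨t0, ht0⟩ := hc0
      by_cases hc1 : ∃ t : ℝ, b 1 = t • α
      · obtain ⟨t1, ht1⟩ := hc1
        exfalso
        have ht0ne : t0 ≠ 0 := by
          rintro rfl; exact hb0ne (by simp [ht0])
        have hsum : ∑ i, (![t1, -t0] : Fin 2 → ℝ) i • b i = 0 := by
          rw [Fin.sum_univ_two]
          simp only [Matrix.cons_val_zero, Matrix.cons_val_one, Matrix.head_cons, ht0, ht1]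
          module
        have := Fintype.linearIndependent_iff.mp hb ![t1, -t0] hsum 1
        simp at this
        exact ht0ne this
      · push_neg at hc1
        exact ⟨b 1, hb1, hc1⟩
    · push_neg at hc0
      exact ⟨b 0, hb0, hc0⟩
  obtain ⟨β, ⟨hβS, hβnm⟩, hβmin⟩ := aux_min b hb T2 (fun t ht => ht.1) hT2ne
  have hβne : β ≠ 0 := fun h => hβnm 0 (by simp [h])
  have hβpos : 0 < ‖β‖ := norm_pos_iff.mpr hβne
  have hαβ : ‖α‖ ≤ ‖β‖ := hαmin β ⟨hβS, hβne⟩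
  -- inner product bound
  have hip2 : |⟪α, β⟫| ≤ ‖α‖ ^ 2 / 2 := by
    have hsubT : β - α ∈ T2 := by
      refine ⟨Sp.sub_mem hβS hαS, fun t ht => hβnm (t + 1) ?_⟩
      rw [add_smul, one_smul, ← ht]; abel
    have haddT : β + α ∈ T2 := by
      refine ⟨Sp.add_mem hβS hαS, fun t ht => hβnm (t - 1) ?_⟩
      rw [sub_smul, one_smul, ← ht]; abel
    have h1 : ‖β‖ ≤ ‖β - α‖ := hβmin _ hsubT
    have h2 : ‖β‖ ≤ ‖β + α‖ := hβmin _ haddT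
    have h1' : ‖β‖ ^ 2 ≤ ‖β - α‖ ^ 2 := by
      have := norm_nonneg β; nlinarith
    have h2' : ‖β‖ ^ 2 ≤ ‖β + α‖ ^ 2 := by
      have := norm_nonneg β; nlinarith
    rw [norm_sub_sq_real] at h1'
    rw [norm_add_sq_real] at h2'
    have hc := real_inner_comm β α
    rw [abs_le]
    constructor <;> linarith
  have hip : |⟪α, β⟫| ≤ ‖α‖ * ‖β‖ / 2 := by
    refine hip2.trans ?_
    nlinarith
  -- ℝ-span equality
  have hli : LinearIndependent ℝ ![β, α] := by
    rw [linearIndependent_fin2]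
    refine ⟨hαne, fun a h => hβnm a h.symm⟩
  have hαF : α ∈ Submodule.span ℝ (Set.range b) := Submodule.span_subset_span ℤ ℝ _ hαS
  have hβF : β ∈ Submodule.span ℝ (Set.range b) := Submodule.span_subset_span ℤ ℝ _ hβS
  haveI : FiniteDimensional ℝ (Submodule.span ℝ (Set.range b)) :=
    FiniteDimensional.span_of_finite ℝ (Set.finite_range b)
  have hspanR : Submodule.span ℝ (Set.range ![β, α]) = Submodule.span ℝ (Set.range b) := by
    apply Submodule.eq_of_le_of_finrank_le
    · rw [Submodule.span_le, aux_range_two]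
      rintro x hx
      simp only [Matrix.cons_val_zero, Matrix.cons_val_one, Matrix.head_cons] at hx
      rcases hx with rfl | rfl
      · exact hβF
      · exact hαF
    · rw [finrank_span_eq_card hb, finrank_span_eq_card hli]
  -- every element of Sp lies in span ℤ {α, β}
  have key : ∀ s ∈ Sp, s ∈ Submodule.span ℤ ({α, β} : Set E) := by
    intro s hs
    have hsF : s ∈ Submodule.span ℝ (Set.range ![β, α]) := by
      rw [hspanR]
      exact Submodule.span_subset_span ℤ ℝ _ hs
    rw [aux_range_two, Submodule.mem_span_pair] at hsF
    simp only [Matrix.cons_val_zero, Matrix.cons_val_one, Matrix.head_cons] at hsF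
    obtain ⟨y, x, hxy⟩ := hsF
    set m : ℤ := round x with hm
    set n : ℤ := round y with hn
    set u : ℝ := x - m with hu_def
    set v : ℝ := y - n with hv_def
    have hu : |u| ≤ 1/2 := abs_sub_round x
    have hv : |v| ≤ 1/2 := abs_sub_round y
    set s' : E := s - (m • α + n • β) with hs'def
    have hs'S : s' ∈ Sp := Sp.sub_mem hs (Sp.add_mem (Sp.smul_mem m hαS) (Sp.smul_mem n hβS))
    have hs'eq : s' = u • α + v • β := by
      rw [hs'def, ← hxy, hu_def, hv_def, ← Int.cast_smul_eq_zsmul ℝ m α,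
        ← Int.cast_smul_eq_zsmul ℝ n β, sub_smul, sub_smul]
      abel
    clear_value s' u v m n
    clear hu_def hv_def hm hn
    by_cases hvz : v = 0
    · have hs'α : s' = u • α := by rw [hs'eq, hvz, zero_smul, add_zero]
      have hnorm : ‖s'‖ ≤ ‖α‖ / 2 := by
        rw [hs'α, norm_smul, Real.norm_eq_abs]
        calc |u| * ‖α‖ ≤ (1/2) * ‖α‖ := by
              exact mul_le_mul_of_nonneg_right hu (norm_nonneg α)
          _ = ‖α‖ / 2 := by ring
      have hz : s' = 0 := by
        by_contra h
        have := hαmin s' ⟨hs'S, h⟩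
        linarith
      rw [hs'def] at hz
      have hseq : s = m • α + n • β := sub_eq_zero.mp hz
      rw [Submodule.mem_span_pair]
      exact ⟨m, n, hseq.symm⟩
    · exfalso
      have hs'T2 : s' ∈ T2 := by
        refine ⟨hs'S, fun t ht => ?_⟩
        apply hβnm (v⁻¹ * (t - u))
        have h' : u • α + v • β = t • α := by rw [← hs'eq]; exact ht
        have hvβ : v • β = (t - u) • α := by
          rw [sub_smul t u α]
          exact eq_sub_of_add_eq' h'
        rw [mul_smul, ← hvβ, inv_smul_smul₀ hvz]
      have hge : ‖β‖ ≤ ‖s'‖ := hβmin s' hs'T2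
      have hexp : ‖s'‖ ^ 2 = u^2 * ‖α‖^2 + 2*(u*v)*⟪α, β⟫ + v^2 * ‖β‖^2 := by
        rw [hs'eq, norm_add_sq_real, norm_smul, norm_smul, real_inner_smul_left,
          real_inner_smul_right, Real.norm_eq_abs, Real.norm_eq_abs, mul_pow, mul_pow,
          sq_abs, sq_abs]
        ring
      rw [abs_le] at hu hv hip2
      have hge' : ‖β‖^2 ≤ ‖s'‖^2 := by nlinarith [norm_nonneg s']
      have hu2 : u^2 ≤ 1/4 := by nlinarith [hu.1, hu.2]
      have hv2 : v^2 ≤ 1/4 := by nlinarith [hv.1, hv.2]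
      have huv : u*v ≤ 1/4 ∧ -(1/4) ≤ u*v := by
        constructor <;> nlinarith [hu.1, hu.2, hv.1, hv.2]
      have hI : 2*(u*v)*⟪α, β⟫ ≤ ‖α‖^2/4 := by
        nlinarith [huv.1, huv.2, hip2.1, hip2.2]
      have h4 : u^2*‖α‖^2 ≤ (1/4)*‖α‖^2 := mul_le_mul_of_nonneg_right hu2 (sq_nonneg _)
      have h5 : v^2*‖β‖^2 ≤ (1/4)*‖β‖^2 := mul_le_mul_of_nonneg_right hv2 (sq_nonneg _)
      have h6 : ‖α‖^2 ≤ ‖β‖^2 := by nlinarith [norm_nonneg α]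
      nlinarith [pow_pos hβpos 2]
  have hspanZ : Submodule.span ℤ ({α, β} : Set E) = Sp := by
    apply le_antisymm
    · rw [Submodule.span_le]
      rintro x (rfl | rfl)
      · exact hαS
      · exact hβS
    · exact fun s hs => key s hs
  refine ⟨α, β, hαS, hβS, hspanZ, fun s hs hne => hαmin s ⟨hs, hne⟩, hip, ?_⟩
  unfold wedgeNorm
  have habs := abs_le.mp hip
  have h2 : ⟪α, β⟫ ^ 2 ≤ (‖α‖ * ‖β‖ / 2) ^ 2 := by nlinarith
  have hy : 0 ≤ ‖α‖^2*‖β‖^2 - ⟪α, β⟫^2 := by nlinarith [sq_nonneg (‖α‖*‖β‖)]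
  rw [Real.le_sqrt (by positivity) hy]
  have h3 : Real.sqrt 3 ^ 2 = 3 := Real.sq_sqrt (by norm_num)
  nlinarith [mul_pos hαpos hβpos]
end

section
/- If L is a semistable Euclidean lattice, then its dual lattice L^∨ is also semistable. -/
open scoped RealInnerProductSpace

/-- The slope `μ = (−log covolume)/rank` of the lattice spanned by a `ℤ`-basis `v`,
with covolume `√(det Gram(v))`. -/
noncomputable def latticeSlope {E : Type*} [NormedAddCommGroup E] [InnerProductSpace ℝ E]
    {ι : Type*} [Fintype ι] [DecidableEq ι] (v : ι → E) (k : ℕ) : ℝ :=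
  -Real.log (Real.sqrt (gramMatrix v).det) / k

open Matrix

namespace DualSS

/-- coordinate matrix whose rows are the vectors of the family -/
def mat {k n : ℕ} (v : Fin k → EuclideanSpace ℝ (Fin n)) : Matrix (Fin k) (Fin n) ℝ :=
  Matrix.of fun i j => v i j

lemma sum_smul_apply {n k : ℕ} (c : Fin k → ℝ) (v : Fin k → EuclideanSpace ℝ (Fin n)) (j : Fin n) :
    (∑ i, c i • v i) j = ∑ i, c i * (v i j) := by
  induction (Finset.univ : Finset (Fin k)) using Finset.induction with
  | empty => simp
  | insert a s h ih => rw [Finset.sum_insert h, Finset.sum_insert h, ← ih]; rfl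

lemma inner_euc {n : ℕ} (x y : EuclideanSpace ℝ (Fin n)) : ⟪x, y⟫ = ∑ i, x i * y i := by
  simp [PiLp.inner_apply, RCLike.inner_apply, mul_comm]

lemma gram_eq {k n : ℕ} (v : Fin k → EuclideanSpace ℝ (Fin n)) :
    gramMatrix v = mat v * (mat v)ᵀ := by
  ext i j
  simp [gramMatrix, mat, mul_apply, inner_euc]

lemma rows_indep {k n : ℕ} {v : Fin k → EuclideanSpace ℝ (Fin n)}
    (hv : LinearIndependent ℝ v) :
    ∀ c : Fin k → ℝ, Matrix.vecMul c (mat v) = 0 → c = 0 := by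
  intro c hc
  have h0 : ∑ i, c i • v i = 0 := by
    ext j
    have := congrFun hc j
    simpa [Matrix.vecMul, dotProduct, mat, sum_smul_apply] using this
  funext i
  exact Fintype.linearIndependent_iff.mp hv c h0 i

lemma gram_posdef_of_rows {k n : ℕ} (M : Matrix (Fin k) (Fin n) ℝ)
    (h : ∀ c : Fin k → ℝ, Matrix.vecMul c M = 0 → c = 0) : (M * Mᵀ).PosDef := by
  refine Matrix.PosDef.of_dotProduct_mulVec_pos ?_ ?_
  · have := Matrix.isHermitian_mul_conjTranspose_self M
    rwa [Matrix.conjTranspose_eq_transpose_of_trivial] at this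
  · intro x hx
    have hstar : star x = x := by simp
    have hu : Matrix.vecMul x M ≠ 0 := fun h0 => hx (h x h0)
    have hcalc : star x ⬝ᵥ ((M * Mᵀ) *ᵥ x) = Matrix.vecMul x M ⬝ᵥ Matrix.vecMul x M := by
      rw [hstar, ← Matrix.mulVec_mulVec, Matrix.dotProduct_mulVec, Matrix.mulVec_transpose]
    rw [hcalc]
    obtain ⟨t, ht⟩ : ∃ t, Matrix.vecMul x M t ≠ 0 := by
      by_contra hcon
      push_neg at hcon
      exact hu (funext hcon)
    have : (0:ℝ) < ∑ t, Matrix.vecMul x M t * Matrix.vecMul x M t :=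
      Finset.sum_pos' (fun t _ => mul_self_nonneg _)
        ⟨t, Finset.mem_univ _, mul_self_pos.mpr ht⟩
    simpa [dotProduct] using this

lemma vecMul_eq_zero {m : ℕ} {M : Matrix (Fin m) (Fin m) ℝ} (hM : IsUnit M.det)
    {c : Fin m → ℝ} (hc : Matrix.vecMul c M = 0) : c = 0 := by
  have : Matrix.vecMul (Matrix.vecMul c M) M⁻¹ = c := by
    rw [Matrix.vecMul_vecMul, Matrix.mul_nonsing_inv _ hM, Matrix.vecMul_one]
  rw [← this, hc, Matrix.zero_vecMul]

lemma isUnit_det_of_gram {n : ℕ} {P : Matrix (Fin n) (Fin n) ℝ} (hPd : (P * Pᵀ).PosDef) :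
    IsUnit P.det := by
  have h : (P * Pᵀ).det = P.det * P.det := by rw [Matrix.det_mul, Matrix.det_transpose]
  have := hPd.det_pos
  rw [h] at this
  rcases mul_self_pos.mp this with hne
  exact isUnit_iff_ne_zero.mpr hne

lemma one_le_det_one_add {k : ℕ} {R : Matrix (Fin k) (Fin k) ℝ} (hR : R.PosSemidef) :
    1 ≤ (1 + R).det := by
  have hH := hR.1
  have hst := hH.spectral_theorem
  set U : Matrix (Fin k) (Fin k) ℝ :=
    (Matrix.IsHermitian.eigenvectorUnitary hH : Matrix (Fin k) (Fin k) ℝ) with hUdef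
  have hU1 : U * star U = 1 :=
    (Matrix.mem_unitaryGroup_iff).mp (Matrix.IsHermitian.eigenvectorUnitary hH).2
  have h1 : (1 + R) = U * (1 + diagonal (RCLike.ofReal ∘ hH.eigenvalues)) * star U := by
    rw [Matrix.mul_add, Matrix.add_mul, Matrix.mul_one, hU1]
    conv_lhs => rw [hst, Unitary.conjStarAlgAut_apply]
  have hdetU : det U * det (star U) = 1 := by rw [← det_mul, hU1, det_one]
  rw [h1, Matrix.det_mul, Matrix.det_mul, mul_comm (det U), mul_assoc, hdetU, mul_one]
  have h2 : (1 : Matrix (Fin k) (Fin k) ℝ) + diagonal (RCLike.ofReal ∘ hH.eigenvalues)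
      = diagonal (fun i => 1 + hH.eigenvalues i) := by
    rw [← Matrix.diagonal_one, Matrix.diagonal_add]; rfl
  rw [h2, det_diagonal]
  calc (1:ℝ) = ∏ _i : Fin k, 1 := by simp
  _ ≤ ∏ i, (1 + hH.eigenvalues i) := by
      apply Finset.prod_le_prod
      · intros; norm_num
      · intro i _; have := hR.eigenvalues_nonneg i; linarith

open scoped MatrixOrder in
lemma det_le_det_add {k : ℕ} {Q R : Matrix (Fin k) (Fin k) ℝ}
    (hQ : Q.PosDef) (hR : R.PosSemidef) : Q.det ≤ (Q + R).det := by
  set C := CFC.sqrt Q with hCdef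
  have hC2 : C * C = Q := CFC.sqrt_mul_sqrt_self Q hQ.posSemidef.nonneg
  have hCps : C.PosSemidef := (CFC.sqrt_nonneg Q).posSemidef
  have hCdet : C.det * C.det = Q.det := by rw [← Matrix.det_mul, hC2]
  have hCunit : IsUnit C.det := by
    refine isUnit_iff_ne_zero.mpr fun h0 => ?_
    rw [h0, mul_zero] at hCdet
    exact hQ.det_pos.ne' hCdet.symm
  have hCC : C * C⁻¹ = 1 := Matrix.mul_nonsing_inv _ hCunit
  have hCC' : C⁻¹ * C = 1 := Matrix.nonsing_inv_mul _ hCunit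
  have hS : (C⁻¹ * R * C⁻¹).PosSemidef := by
    have hherm : C⁻¹.IsHermitian := hCps.1.inv
    have := hR.mul_mul_conjTranspose_same C⁻¹
    rwa [hherm.eq] at this
  have hsplit : Q + R = C * (1 + C⁻¹ * R * C⁻¹) * C := by
    rw [Matrix.mul_add, Matrix.add_mul, Matrix.mul_one, hC2]
    congr 1
    symm
    calc C * (C⁻¹ * R * C⁻¹) * C = (C * C⁻¹) * R * (C⁻¹ * C) := by
          simp only [Matrix.mul_assoc]
    _ = R := by rw [hCC, hCC', Matrix.one_mul, Matrix.mul_one]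
  rw [hsplit, Matrix.det_mul, Matrix.det_mul]
  have h1 := one_le_det_one_add hS
  have hCd : 0 ≤ C.det := by
    rw [hCps.1.det_eq_prod_eigenvalues]
    exact Finset.prod_nonneg fun i _ => by simpa using hCps.eigenvalues_nonneg i
  nlinarith [hCdet]

lemma slope_det_iff {a b : ℝ} (ha : 0 < a) (hb : 0 < b) {m p : ℕ} (hm : 0 < m) (hp : 0 < p) :
    -Real.log (Real.sqrt a) / m ≤ -Real.log (Real.sqrt b) / p ↔ b ^ m ≤ a ^ p := by
  rw [Real.log_sqrt ha.le, Real.log_sqrt hb.le,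
    div_le_div_iff₀ (by exact_mod_cast hm) (by exact_mod_cast hp)]
  have key : (-(Real.log a / 2) * p ≤ -(Real.log b / 2) * m) ↔
      ((m : ℝ) * Real.log b ≤ (p : ℝ) * Real.log a) := by
    constructor <;> intro hyp <;> linarith
  rw [key, ← Real.log_pow, ← Real.log_pow,
    Real.log_le_log_iff (by positivity) (by positivity)]



lemma dot_sum_left {ι : Type*} {n : ℕ} (s : Finset ι) (f : ι → (Fin n → ℤ)) (y : Fin n → ℤ) :
    (∑ i ∈ s, f i) ⬝ᵥ y = ∑ i ∈ s, f i ⬝ᵥ y := by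
  simp only [dotProduct, Finset.sum_apply, Finset.sum_mul]
  exact Finset.sum_comm

lemma psd_self_mul_transpose {k n : ℕ} (W : Matrix (Fin k) (Fin n) ℝ) :
    (W * Wᵀ).PosSemidef := by
  have := Matrix.posSemidef_self_mul_conjTranspose W
  rwa [Matrix.conjTranspose_eq_transpose_of_trivial] at this

lemma gram_sub_proj {k m n : ℕ} (X : Matrix (Fin k) (Fin n) ℝ) (Y : Matrix (Fin m) (Fin n) ℝ)
    (hYYu : IsUnit (Y * Yᵀ).det) :
    (X - X * Yᵀ * (Y * Yᵀ)⁻¹ * Y) * (X - X * Yᵀ * (Y * Yᵀ)⁻¹ * Y)ᵀ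
      = X * Xᵀ - X * Yᵀ * (Y * Yᵀ)⁻¹ * (Y * Xᵀ) := by
  set S : Matrix (Fin m) (Fin m) ℝ := (Y * Yᵀ)⁻¹ with hSdef
  have hS : Sᵀ = S := by
    rw [hSdef, Matrix.transpose_nonsing_inv, Matrix.transpose_mul, Matrix.transpose_transpose]
  have hYYc : S * (Y * Yᵀ) = 1 := Matrix.nonsing_inv_mul _ hYYu
  have hcanc : ∀ {p : ℕ} (M : Matrix (Fin m) (Fin p) ℝ), S * (Y * (Yᵀ * M)) = M := by
    intro p M
    rw [← Matrix.mul_assoc Y Yᵀ M, ← Matrix.mul_assoc S, hYYc, Matrix.one_mul]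
  simp only [Matrix.transpose_sub, Matrix.transpose_mul, Matrix.transpose_transpose, hS]
  simp only [Matrix.sub_mul, Matrix.mul_sub, Matrix.mul_assoc, hcanc]
  abel

lemma posdef_conj {k : ℕ} {M B : Matrix (Fin k) (Fin k) ℝ} (hM : M.PosDef)
    (hB : IsUnit B.det) : (Bᵀ * M * B).PosDef := by
  have hMt : Mᵀ = M := by
    have := hM.1
    rwa [Matrix.IsHermitian, Matrix.conjTranspose_eq_transpose_of_trivial] at this
  refine Matrix.PosDef.of_dotProduct_mulVec_pos ?_ ?_
  · rw [Matrix.IsHermitian, Matrix.conjTranspose_eq_transpose_of_trivial,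
      Matrix.transpose_mul, Matrix.transpose_mul, Matrix.transpose_transpose, hMt,
      Matrix.mul_assoc]
  · intro x hx
    have hBx : B *ᵥ x ≠ 0 := by
      intro h0
      apply hx
      have hxeq : x = B⁻¹ *ᵥ (B *ᵥ x) := by
        rw [Matrix.mulVec_mulVec, Matrix.nonsing_inv_mul _ hB, Matrix.one_mulVec]
      rw [hxeq, h0, Matrix.mulVec_zero]
    have hcalc : star x ⬝ᵥ ((Bᵀ * M * B) *ᵥ x)
        = star (B *ᵥ x) ⬝ᵥ (M *ᵥ (B *ᵥ x)) := by
      have h1 : star x = x := by simp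
      have h2 : star (B *ᵥ x) = B *ᵥ x := by simp
      rw [h1, h2, ← Matrix.mulVec_mulVec, ← Matrix.mulVec_mulVec,
        Matrix.dotProduct_mulVec, Matrix.vecMul_transpose]
    rw [hcalc]
    exact hM.dotProduct_mulVec_pos hBx

set_option maxHeartbeats 1000000 in
lemma key_ineq {n k : ℕ} (hk : 0 < k) (hkn : k ≤ n)
    (P : Matrix (Fin n) (Fin n) ℝ) (V : Matrix (Fin k) (Fin n) ℝ)
    (hPd : (P * Pᵀ).PosDef) (hVd : (V * Vᵀ).PosDef)
    (A : Matrix (Fin k) (Fin n) ℤ)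
    (hA : A.map (Int.castRingHom ℝ) = V * Pᵀ)
    (hsemi : ∀ m : ℕ, 0 < m → ∀ C : Matrix (Fin m) (Fin n) ℤ,
      (∀ c : Fin m → ℝ, Matrix.vecMul c (C.map (Int.castRingHom ℝ) * P) = 0 → c = 0) →
      (P * Pᵀ).det ^ m ≤
        ((C.map (Int.castRingHom ℝ) * P) * (C.map (Int.castRingHom ℝ) * P)ᵀ).det ^ n) :
    1 ≤ (V * Vᵀ).det ^ n * (P * Pᵀ).det ^ k := by
  classical
  have hdP : IsUnit P.det := isUnit_det_of_gram hPd
  have hdPT : IsUnit Pᵀ.det := by rwa [Matrix.det_transpose]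
  have hdV : IsUnit (V * Vᵀ).det := isUnit_iff_ne_zero.mpr hVd.det_pos.ne'
  have hAR : ∀ c : Fin k → ℝ, Matrix.vecMul c (A.map (Int.castRingHom ℝ)) = 0 → c = 0 := by
    intro c hc
    rw [hA, ← Matrix.vecMul_vecMul] at hc
    have h2 : Matrix.vecMul c V = 0 := vecMul_eq_zero hdPT hc
    have h3 : Matrix.vecMul c (V * Vᵀ) = 0 := by
      rw [← Matrix.vecMul_vecMul, h2, Matrix.zero_vecMul]
    exact vecMul_eq_zero hdV h3
  set N := LinearMap.ker (Matrix.mulVecLin A) with hN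
  obtain ⟨m, snf⟩ := Submodule.smithNormalForm (Pi.basisFun ℤ (Fin n)) N
  have ha : ∀ i, snf.a i ≠ 0 := by
    intro i hai
    have h0 := snf.snf i
    rw [hai, zero_smul] at h0
    exact (snf.bN.ne_zero i) (by exact_mod_cast Submodule.coe_eq_zero.mp h0)
  have hAy : ∀ i, A *ᵥ (snf.bM (snf.f i)) = 0 := by
    intro i
    have hmem : (snf.bN i : Fin n → ℤ) ∈ N := (snf.bN i).2
    have hmem2 : A *ᵥ (snf.bN i : Fin n → ℤ) = 0 := by
      have := LinearMap.mem_ker.mp hmem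
      rwa [Matrix.mulVecLin_apply] at this
    rw [snf.snf i, Matrix.mulVec_smul] at hmem2
    exact (smul_eq_zero.mp hmem2).resolve_left (ha i)
  -- joint independence: k + m ≤ n
  have hcard1 : k + m ≤ n := by
    have hind : LinearIndependent ℤ (Sum.elim (fun i : Fin k => (fun t => A i t : Fin n → ℤ))
        (fun j : Fin m => (snf.bM (snf.f j) : Fin n → ℤ))) := by
      rw [Fintype.linearIndependent_iff]
      intro g hg
      rw [Fintype.sum_sum_type] at hg
      simp only [Sum.elim_inl, Sum.elim_inr] at hg
      set sA : Fin n → ℤ := ∑ i, g (Sum.inl i) • (fun t => A i t) with hsA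
      set w : Fin n → ℤ := ∑ j, g (Sum.inr j) • (snf.bM (snf.f j) : Fin n → ℤ) with hw
      have hrowy : ∀ (i : Fin k) (l : Fin m), (fun t => A i t) ⬝ᵥ (snf.bM (snf.f l) : Fin n → ℤ) = 0 := by
        intro i l
        have := congrFun (hAy l) i
        simpa [Matrix.mulVec, dotProduct] using this
      have hwneg : w = -sA := by
        rw [eq_neg_iff_add_eq_zero, add_comm]; exact hg
      have hwy : ∀ l, w ⬝ᵥ (snf.bM (snf.f l) : Fin n → ℤ) = 0 := by
        intro l
        rw [hwneg, neg_dotProduct, hsA, dot_sum_left]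
        simp only [smul_dotProduct, hrowy, smul_zero, Finset.sum_const_zero, neg_zero]
      have hww : w ⬝ᵥ w = 0 := by
        nth_rewrite 1 [hw]
        rw [dot_sum_left]
        apply Finset.sum_eq_zero
        intro j _
        rw [smul_dotProduct, dotProduct_comm, hwy j, smul_zero]
      have hw0 : w = 0 := by
        funext t
        have h1 : ∑ t, w t * w t = 0 := hww
        have := (Finset.sum_eq_zero_iff_of_nonneg (fun t _ => mul_self_nonneg (w t))).mp h1 t
          (Finset.mem_univ t)
        exact mul_self_eq_zero.mp this
      have hyind : LinearIndependent ℤ (fun j : Fin m => (snf.bM (snf.f j) : Fin n → ℤ)) :=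
        snf.bM.linearIndependent.comp snf.f snf.f.injective
      have hinr : ∀ j, g (Sum.inr j) = 0 :=
        Fintype.linearIndependent_iff.mp hyind _ (hw.symm.trans hw0)
      have hsA0 : sA = 0 := by
        have : sA + w = 0 := hg
        rw [hw0, add_zero] at this; exact this
      have hinl : ∀ i, g (Sum.inl i) = 0 := by
        have hcast : Matrix.vecMul (fun i => ((g (Sum.inl i) : ℤ) : ℝ)) (A.map (Int.castRingHom ℝ)) = 0 := by
          funext t
          have h2 : ∑ x, g (Sum.inl x) * A x t = 0 := by
            have h3 : sA t = 0 := by rw [hsA0]; rfl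
            rw [hsA] at h3
            simpa using h3
          simp only [Matrix.vecMul, dotProduct, Matrix.map_apply, Int.coe_castRingHom,
            Pi.zero_apply]
          exact_mod_cast h2
        intro i
        have h4 : ((g (Sum.inl i) : ℤ) : ℝ) = 0 := by simpa using congrFun (hAR _ hcast) i
        exact_mod_cast h4
      intro s
      cases s with
      | inl i => exact hinl i
      | inr j => exact hinr j
    have hfin := hind.fintype_card_le_finrank
    simpa [Module.finrank_pi] using hfin
  -- n - m ≤ k
  have hcard2 : n ≤ k + m := by
    have hind2 : LinearIndependent ℤ
        (fun j : {j : Fin n // j ∉ Set.range snf.f} => A *ᵥ (snf.bM j.1 : Fin n → ℤ)) := by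
      rw [Fintype.linearIndependent_iff]
      intro g hg
      have hz : (∑ j, g j • (snf.bM j.1 : Fin n → ℤ)) ∈ N := by
        apply LinearMap.mem_ker.mpr
        rw [map_sum]
        simp only [LinearMap.map_smul, Matrix.mulVecLin_apply]
        exact hg
      intro j0
      have h0 := snf.repr_eq_zero_of_notMem_range ⟨_, hz⟩ j0.2
      rw [map_sum] at h0
      simp only [_root_.map_smul, Module.Basis.repr_self, Finsupp.smul_single, smul_eq_mul, mul_one,
        Finsupp.coe_finset_sum, Finset.sum_apply, Finsupp.single_apply] at h0
      have hrw : ∀ j : {j : Fin n // j ∉ Set.range snf.f},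
          (if (j.1 : Fin n) = j0.1 then g j else 0) = (if j = j0 then g j else 0) := by
        intro j
        by_cases h : j = j0
        · simp [h]
        · rw [if_neg h, if_neg (fun hh => h (Subtype.ext hh))]
      rw [Finset.sum_congr rfl (fun j _ => hrw j), Finset.sum_ite_eq' Finset.univ j0 g] at h0
      simpa using h0
    have hfin := hind2.fintype_card_le_finrank
    rw [Module.finrank_pi] at hfin
    have hc1 : Fintype.card {j : Fin n // j ∉ Set.range snf.f}
        = n - Fintype.card {j : Fin n // j ∈ Set.range snf.f} := by
      rw [Fintype.card_subtype_compl, Fintype.card_fin]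
    have hc2 : Fintype.card {j : Fin n // j ∈ Set.range snf.f} = m := by
      have e1 : {j : Fin n // j ∈ Set.range snf.f} ≃ Fin m :=
        (Equiv.ofInjective _ snf.f.injective).symm
      rw [Fintype.card_congr e1, Fintype.card_fin]
    rw [hc1, hc2, Fintype.card_fin] at hfin
    -- also m ≤ n
    omega
  have hmeq : m = n - k := by omega
  subst hmeq
  -- complement equivalence
  have hcardc : Fintype.card {j : Fin n // j ∉ Set.range snf.f} = k := by
    rw [Fintype.card_subtype_compl]
    have e1 : {j : Fin n // j ∈ Set.range snf.f} ≃ Fin (n - k) :=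
      (Equiv.ofInjective _ snf.f.injective).symm
    rw [Fintype.card_congr e1, Fintype.card_fin, Fintype.card_fin]
    omega
  let σ : Fin k ≃ {j : Fin n // j ∉ Set.range snf.f} :=
    Fintype.equivOfCardEq (by rw [hcardc, Fintype.card_fin])
  let G : Fin k ⊕ Fin (n - k) → Fin n := Sum.elim (fun i => (σ i).1) snf.f
  have hGinj : Function.Injective G := by
    intro s t hst
    cases s with
    | inl a => cases t with
      | inl b =>
        simp only [G, Sum.elim_inl] at hst
        rw [σ.injective (Subtype.ext hst)]
      | inr b =>
        exact absurd ⟨b, hst.symm⟩ (σ a).2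
    | inr a => cases t with
      | inl b =>
        exact absurd ⟨a, hst⟩ (σ b).2
      | inr b =>
        rw [snf.f.injective hst]
  have hGbij : Function.Bijective G :=
    (Fintype.bijective_iff_injective_and_card G).mpr ⟨hGinj, by simp; omega⟩
  let e : (Fin k ⊕ Fin (n - k)) ≃ Fin n := Equiv.ofBijective G hGbij
  have he_inr : ∀ i, e (Sum.inr i) = snf.f i := fun i => rfl
  have he_inl : ∀ i, (e (Sum.inl i) : Fin n) ∉ Set.range snf.f := fun i => (σ i).2
  -- the unimodular base-change matrix
  set Tn : Matrix (Fin n) (Fin n) ℤ := Matrix.of (fun j t => snf.bM j t) with hTn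
  have hTu : IsUnit Tn.det := by
    have h1 : (Pi.basisFun ℤ (Fin n)).toMatrix snf.bM = Tnᵀ := by
      ext i j
      simp [Module.Basis.toMatrix_apply, Pi.basisFun_repr, hTn]
    have h2 := Module.Basis.toMatrix_mul_toMatrix_flip (Pi.basisFun ℤ (Fin n)) snf.bM
    have h3 : Tnᵀ.det * (snf.bM.toMatrix (Pi.basisFun ℤ (Fin n))).det = 1 := by
      rw [← Matrix.det_mul, ← h1, h2, Matrix.det_one]
    rw [Matrix.det_transpose] at h3
    exact IsUnit.of_mul_eq_one _ h3
  set Tc : Matrix (Fin n) (Fin n) ℝ := Tn.map (Int.castRingHom ℝ) with hTc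
  have hT2 : Tc.det ^ 2 = 1 := by
    rw [hTc, ← RingHom.mapMatrix_apply, ← RingHom.map_det]
    rcases Int.isUnit_iff.mp hTu with h | h <;> rw [h] <;> norm_num
  have hTcdet : IsUnit Tc.det := by
    refine isUnit_iff_ne_zero.mpr fun h0 => ?_
    rw [h0] at hT2; norm_num at hT2
  set P2 : Matrix (Fin n) (Fin n) ℝ := Tc * P with hP2
  have hdP2 : IsUnit P2.det := by
    rw [hP2, Matrix.det_mul]; exact hTcdet.mul hdP
  set X : Matrix (Fin k) (Fin n) ℝ := Matrix.of (fun i t => P2 (e (Sum.inl i)) t) with hX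
  set Y : Matrix (Fin (n - k)) (Fin n) ℝ := Matrix.of (fun i t => P2 (e (Sum.inr i)) t) with hY
  have hGamdet : ((P2 * P2ᵀ).submatrix e e).det = (P * Pᵀ).det := by
    rw [Matrix.det_submatrix_equiv_self]
    have hexp : P2 * P2ᵀ = Tc * (P * Pᵀ) * Tcᵀ := by
      rw [hP2, Matrix.transpose_mul]
      simp only [Matrix.mul_assoc]
    rw [hexp, Matrix.det_mul, Matrix.det_mul, Matrix.det_transpose]
    have : Tc.det * (P * Pᵀ).det * Tc.det = (P * Pᵀ).det * Tc.det ^ 2 := by ring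
    rw [this, hT2, mul_one]
  have hblocks : (P2 * P2ᵀ).submatrix e e
      = Matrix.fromBlocks (X * Xᵀ) (X * Yᵀ) (Y * Xᵀ) (Y * Yᵀ) := by
    ext s t
    cases s <;> cases t <;>
      simp [Matrix.fromBlocks, Matrix.mul_apply, hX, hY, Matrix.submatrix_apply]
  -- pairing entries are integers
  have hVP2 : V * P2ᵀ = (A.map (Int.castRingHom ℝ)) * Tcᵀ := by
    rw [hP2, Matrix.transpose_mul, ← Matrix.mul_assoc, hA]
  have hentry : ∀ (i : Fin k) (j : Fin n),
      (V * P2ᵀ) i j = ((A *ᵥ (snf.bM j) : Fin k → ℤ) i : ℝ) := by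
    intro i j
    rw [hVP2]
    simp only [Matrix.mul_apply, Matrix.map_apply, Int.coe_castRingHom, Matrix.transpose_apply,
      hTc, hTn, Matrix.of_apply, Matrix.mulVec, dotProduct]
    push_cast
    rfl
  set Bz : Matrix (Fin k) (Fin k) ℤ :=
    Matrix.of (fun i i' => (A *ᵥ (snf.bM (e (Sum.inl i')))) i) with hBz
  set Bc : Matrix (Fin k) (Fin k) ℝ := Bz.map (Int.castRingHom ℝ) with hBc
  have hVX : V * Xᵀ = Bc := by
    ext i i'
    have h1 : (V * Xᵀ) i i' = (V * P2ᵀ) i (e (Sum.inl i')) := by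
      simp [Matrix.mul_apply, hX]
    rw [h1, hentry]
    simp [hBc, hBz]
  have hVY : V * Yᵀ = 0 := by
    ext i i'
    have h1 : (V * Yᵀ) i i' = (V * P2ᵀ) i (e (Sum.inr i')) := by
      simp [Matrix.mul_apply, hY]
    rw [h1, hentry, he_inr, hAy]
    simp
  -- Bz has nonzero determinant
  have hBzdet : Bz.det ≠ 0 := by
    intro hdet0
    obtain ⟨c, hc0, hBzc⟩ := Matrix.exists_mulVec_eq_zero_iff.mpr hdet0
    have hz : (∑ i', c i' • (snf.bM (e (Sum.inl i')) : Fin n → ℤ)) ∈ N := by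
      apply LinearMap.mem_ker.mpr
      rw [map_sum]
      simp only [LinearMap.map_smul, Matrix.mulVecLin_apply]
      funext i
      simp only [Finset.sum_apply, Pi.smul_apply, smul_eq_mul, Pi.zero_apply]
      have h5 := congrFun hBzc i
      simp only [Matrix.mulVec, dotProduct, hBz, Matrix.of_apply, Pi.zero_apply] at h5
      rw [← h5]
      exact Finset.sum_congr rfl (fun i' _ => mul_comm _ _)
    obtain ⟨i0, hi0⟩ : ∃ i0, c i0 ≠ 0 := by
      by_contra hcon; push_neg at hcon; exact hc0 (funext hcon)
    have h0 := snf.repr_eq_zero_of_notMem_range ⟨_, hz⟩ (he_inl i0)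
    rw [map_sum] at h0
    simp only [_root_.map_smul, Module.Basis.repr_self, Finsupp.smul_single, smul_eq_mul, mul_one,
      Finsupp.coe_finset_sum, Finset.sum_apply, Finsupp.single_apply] at h0
    have hrw : ∀ i' : Fin k,
        (if e (Sum.inl i') = e (Sum.inl i0) then c i' else 0) = (if i' = i0 then c i' else 0) := by
      intro i'
      by_cases h : i' = i0
      · simp [h]
      · rw [if_neg (fun hh => h (by
          have := e.injective hh
          exact Sum.inl_injective this)), if_neg h]
    rw [Finset.sum_congr rfl (fun i' _ => hrw i'), Finset.sum_ite_eq' Finset.univ i0 c] at h0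
    simp at h0
    exact hi0 h0
  have hBcdet : IsUnit Bc.det := by
    rw [hBc, ← RingHom.mapMatrix_apply, ← RingHom.map_det]
    simpa using hBzdet
  have hBc2 : 1 ≤ Bc.det ^ 2 := by
    rw [hBc, ← RingHom.mapMatrix_apply, ← RingHom.map_det]
    have h1 : 1 ≤ Bz.det ^ 2 := by
      nlinarith [Int.one_le_abs hBzdet, sq_abs Bz.det]
    simp only [Int.coe_castRingHom]
    exact_mod_cast h1
  -- Y has independent rows
  have hYind : ∀ c : Fin (n - k) → ℝ, Matrix.vecMul c Y = 0 → c = 0 := by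
    intro c hc
    set c' : Fin n → ℝ := fun t => Sum.elim (fun _ : Fin k => (0:ℝ)) c (e.symm t) with hc'
    have hkey : Matrix.vecMul c' P2 = Matrix.vecMul c Y := by
      funext t'
      simp only [Matrix.vecMul, dotProduct]
      rw [← Equiv.sum_comp e (fun t => c' t * P2 t t')]
      rw [Fintype.sum_sum_type]
      simp [hc', Equiv.symm_apply_apply, hY]
    rw [hc] at hkey
    have hc'0 : c' = 0 := vecMul_eq_zero hdP2 hkey
    funext i
    have h6 := congrFun hc'0 (e (Sum.inr i))
    simpa [hc', Equiv.symm_apply_apply] using h6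
  have hYY : (Y * Yᵀ).PosDef := gram_posdef_of_rows Y hYind
  have hYYu : IsUnit (Y * Yᵀ).det := isUnit_iff_ne_zero.mpr hYY.det_pos.ne'
  haveI : Invertible (Y * Yᵀ) := Matrix.invertibleOfIsUnitDet _ hYYu
  have hSchur0 : ((P2 * P2ᵀ).submatrix e e).det
      = (Y * Yᵀ).det * (X * Xᵀ - (X * Yᵀ) * (Y * Yᵀ)⁻¹ * (Y * Xᵀ)).det := by
    rw [hblocks, Matrix.det_fromBlocks₂₂, Matrix.invOf_eq_nonsing_inv]
  set Z : Matrix (Fin k) (Fin n) ℝ := X - (X * Yᵀ) * (Y * Yᵀ)⁻¹ * Y with hZ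
  have hYYsymm : ((Y * Yᵀ)⁻¹)ᵀ = (Y * Yᵀ)⁻¹ := by
    rw [Matrix.transpose_nonsing_inv, Matrix.transpose_mul, Matrix.transpose_transpose]
  have hYYc : (Y * Yᵀ)⁻¹ * (Y * Yᵀ) = 1 := Matrix.nonsing_inv_mul _ hYYu
  have hZZ : Z * Zᵀ = X * Xᵀ - X * Yᵀ * (Y * Yᵀ)⁻¹ * (Y * Xᵀ) := by
    rw [hZ]
    exact gram_sub_proj X Y hYYu
  have hZV : Z * Vᵀ = Bcᵀ := by
    rw [hZ, Matrix.sub_mul]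
    have h1 : X * Vᵀ = Bcᵀ := by
      rw [← hVX, Matrix.transpose_mul, Matrix.transpose_transpose]
    have h2 : X * Yᵀ * (Y * Yᵀ)⁻¹ * Y * Vᵀ = 0 := by
      have h3 : Y * Vᵀ = 0 := by
        rw [← Matrix.transpose_transpose Y, ← Matrix.transpose_mul, hVY, Matrix.transpose_zero]
      rw [Matrix.mul_assoc _ Y Vᵀ, h3, Matrix.mul_zero]
    rw [h1, h2, sub_zero]
  have hVZ : V * Zᵀ = Bc := by
    rw [← Matrix.transpose_transpose V, ← Matrix.transpose_mul, hZV, Matrix.transpose_transpose]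
  have hVVu : IsUnit ((V * Vᵀ)).det := hdV
  have hdecomp : Z * Zᵀ = Bcᵀ * (V * Vᵀ)⁻¹ * Bc
      + (Z - Z * Vᵀ * (V * Vᵀ)⁻¹ * V) * (Z - Z * Vᵀ * (V * Vᵀ)⁻¹ * V)ᵀ := by
    rw [gram_sub_proj Z V hVVu, hZV, hVZ]
    abel
  have hQpos : (Bcᵀ * (V * Vᵀ)⁻¹ * Bc).PosDef := posdef_conj hVd.inv hBcdet
  have hWpsd := psd_self_mul_transpose (Z - Z * Vᵀ * (V * Vᵀ)⁻¹ * V)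
  have hZdet : (Bcᵀ * (V * Vᵀ)⁻¹ * Bc).det ≤ (Z * Zᵀ).det := by
    rw [hdecomp]
    exact det_le_det_add hQpos hWpsd
  have hQdet : (Bcᵀ * (V * Vᵀ)⁻¹ * Bc).det = Bc.det ^ 2 * ((V * Vᵀ).det)⁻¹ := by
    rw [Matrix.det_mul, Matrix.det_mul, Matrix.det_transpose, Matrix.det_nonsing_inv,
      Ring.inverse_eq_inv']
    ring
  -- numeric endgame
  have hd : 0 < (P * Pᵀ).det := hPd.det_pos
  have hg : 0 < (V * Vᵀ).det := hVd.det_pos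
  have hh : 0 < (Y * Yᵀ).det := hYY.det_pos
  have hd_eq : (P * Pᵀ).det = (Y * Yᵀ).det * (Z * Zᵀ).det := by
    rw [← hGamdet, hSchur0, hZZ]
  have hz_ge : Bc.det ^ 2 * ((V * Vᵀ).det)⁻¹ ≤ (Z * Zᵀ).det := hQdet ▸ hZdet
  have h7 : 1 ≤ (Z * Zᵀ).det * (V * Vᵀ).det := by
    have h8 : Bc.det ^ 2 * ((V * Vᵀ).det)⁻¹ * (V * Vᵀ).det ≤ (Z * Zᵀ).det * (V * Vᵀ).det :=
      mul_le_mul_of_nonneg_right hz_ge hg.le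
    rw [mul_assoc, inv_mul_cancel₀ hg.ne', mul_one] at h8
    linarith
  have h_le : (Y * Yᵀ).det ≤ (P * Pᵀ).det * (V * Vᵀ).det := by
    calc (Y * Yᵀ).det = (Y * Yᵀ).det * 1 := (mul_one _).symm
    _ ≤ (Y * Yᵀ).det * ((Z * Zᵀ).det * (V * Vᵀ).det) := by
        exact mul_le_mul_of_nonneg_left h7 hh.le
    _ = (P * Pᵀ).det * (V * Vᵀ).det := by rw [← mul_assoc, ← hd_eq]
  have hsem : (P * Pᵀ).det ^ (n - k) ≤ (Y * Yᵀ).det ^ n := by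
    rcases Nat.eq_zero_or_pos (n - k) with h0 | hpos
    · have hh1 : (Y * Yᵀ).det = 1 := by
        haveI : IsEmpty (Fin (n - k)) := by rw [h0]; infer_instance
        exact Matrix.det_isEmpty
      have h9 : (P * Pᵀ).det ^ (n - k) = 1 := by rw [h0, pow_zero]
      rw [h9, hh1, one_pow]
    · set C : Matrix (Fin (n - k)) (Fin n) ℤ := Matrix.of (fun i t => snf.bM (snf.f i) t) with hC
      have hCP : C.map (Int.castRingHom ℝ) * P = Y := by
        ext i t
        simp only [Matrix.mul_apply, Matrix.map_apply, Int.coe_castRingHom, hC, Matrix.of_apply,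
          hY, hP2, hTc, hTn]
        rw [← he_inr]
      have := hsemi (n - k) hpos C (by rw [hCP]; exact hYind)
      rwa [hCP] at this
  have hfinal : (P * Pᵀ).det ^ (n - k)
      ≤ (P * Pᵀ).det ^ (n - k) * ((V * Vᵀ).det ^ n * (P * Pᵀ).det ^ k) := by
    have hdn : (P * Pᵀ).det ^ n = (P * Pᵀ).det ^ (n - k) * (P * Pᵀ).det ^ k := by
      rw [← pow_add]
      congr 1
      omega
    calc (P * Pᵀ).det ^ (n - k) ≤ (Y * Yᵀ).det ^ n := hsem
    _ ≤ ((P * Pᵀ).det * (V * Vᵀ).det) ^ n := pow_le_pow_left₀ hh.le h_le n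
    _ = (P * Pᵀ).det ^ (n - k) * ((V * Vᵀ).det ^ n * (P * Pᵀ).det ^ k) := by
        rw [mul_pow, hdn]; ring
  have hpos' : 0 < (P * Pᵀ).det ^ (n - k) := pow_pos hd _
  nth_rewrite 1 [← mul_one ((P * Pᵀ).det ^ (n - k))] at hfinal
  exact le_of_mul_le_mul_left hfinal hpos'

end DualSS

/-- A lattice `L` with `ℤ`-basis `b` of rank `n` is semistable if every nonzero sublattice
has slope at most `μ(L)`; equivalently every family of `ℝ`-linearly independent vectors
of `L` (a `ℤ`-basis of the sublattice it spans) has slope at most `μ(L)`. -/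
def IsSemistableLattice {E : Type*} [NormedAddCommGroup E] [InnerProductSpace ℝ E]
    (L : Submodule ℤ E) {n : ℕ} (b : Fin n → E) : Prop :=
  ∀ (k : ℕ), 0 < k → ∀ v : Fin k → E, (∀ i, v i ∈ L) → LinearIndependent ℝ v →
    latticeSlope v k ≤ latticeSlope b n

set_option maxHeartbeats 1000000 in
/-- If `L` is a semistable full-rank Euclidean lattice in `ℝⁿ`, then its dual lattice
`L^∨ = {x : (x, l) ∈ ℤ for all l ∈ L}` is also semistable. -/
theorem dual_of_semistable_isSemistable {n : ℕ} (hn : 0 < n)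
    (bL : Fin n → EuclideanSpace ℝ (Fin n)) (hbL : LinearIndependent ℝ bL)
    (L : Submodule ℤ (EuclideanSpace ℝ (Fin n)))
    (hL : L = Submodule.span ℤ (Set.range bL))
    (hLs : IsSemistableLattice L bL)
    (D : Submodule ℤ (EuclideanSpace ℝ (Fin n)))
    (hD : ∀ x, x ∈ D ↔ ∀ l ∈ L, ∃ k : ℤ, ⟪x, l⟫ = (k : ℝ))
    (bD : Fin n → EuclideanSpace ℝ (Fin n)) (hbD : LinearIndependent ℝ bD)
    (hDspan : D = Submodule.span ℤ (Set.range bD)) :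
    IsSemistableLattice D bD := by
  classical
  intro k hk v hvD hvind
  have hkn : k ≤ n := by
    have h1 := hvind.fintype_card_le_finrank
    rwa [finrank_euclideanSpace_fin, Fintype.card_fin] at h1
  have hPd : (DualSS.mat bL * (DualSS.mat bL)ᵀ).PosDef :=
    DualSS.gram_posdef_of_rows _ (DualSS.rows_indep hbL)
  have hQd : (DualSS.mat bD * (DualSS.mat bD)ᵀ).PosDef :=
    DualSS.gram_posdef_of_rows _ (DualSS.rows_indep hbD)
  have hVd : (DualSS.mat v * (DualSS.mat v)ᵀ).PosDef :=
    DualSS.gram_posdef_of_rows _ (DualSS.rows_indep hvind)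
  have hmemL : ∀ j, bL j ∈ L := fun j => hL ▸ Submodule.subset_span ⟨j, rfl⟩
  have hpair : ∀ x, x ∈ D → ∀ j, ∃ z : ℤ, ⟪x, bL j⟫ = (z : ℝ) :=
    fun x hx j => (hD x).mp hx _ (hmemL j)
  choose Af hAf using fun (i : Fin k) => hpair (v i) (hvD i)
  have hA : (Matrix.of Af).map (Int.castRingHom ℝ) = DualSS.mat v * (DualSS.mat bL)ᵀ := by
    ext i j
    simp only [Matrix.map_apply, Matrix.of_apply, Int.coe_castRingHom]
    rw [← hAf i j, DualSS.inner_euc]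
    simp [Matrix.mul_apply, DualSS.mat]
  have hrowmem : ∀ (m : ℕ) (C : Matrix (Fin m) (Fin n) ℤ) (i : Fin m),
      (WithLp.toLp 2 (fun t => (C.map (Int.castRingHom ℝ) * DualSS.mat bL) i t) :
        EuclideanSpace ℝ (Fin n)) ∈ L := by
    intro m C i
    rw [hL, Submodule.mem_span_range_iff_exists_fun]
    refine ⟨fun j => C i j, ?_⟩
    ext t
    have h1 : ∀ j, (C i j) • bL j = ((C i j : ℝ)) • bL j :=
      fun j => (Int.cast_smul_eq_zsmul ℝ _ _).symm
    calc (∑ j, C i j • bL j) t = (∑ j, ((C i j : ℝ)) • bL j) t := by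
          rw [Finset.sum_congr rfl (fun j _ => h1 j)]
    _ = ∑ j, (C i j : ℝ) * bL j t := DualSS.sum_smul_apply _ _ _
    _ = (C.map (Int.castRingHom ℝ) * DualSS.mat bL) i t := by
          simp [Matrix.mul_apply, DualSS.mat]
  have hsemi : ∀ m : ℕ, 0 < m → ∀ C : Matrix (Fin m) (Fin n) ℤ,
      (∀ c : Fin m → ℝ, Matrix.vecMul c (C.map (Int.castRingHom ℝ) * DualSS.mat bL) = 0 → c = 0) →
      (DualSS.mat bL * (DualSS.mat bL)ᵀ).det ^ m ≤
        ((C.map (Int.castRingHom ℝ) * DualSS.mat bL) *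
          (C.map (Int.castRingHom ℝ) * DualSS.mat bL)ᵀ).det ^ n := by
    intro m hm C hCind
    set w : Fin m → EuclideanSpace ℝ (Fin n) :=
      fun i => WithLp.toLp 2 (fun t => (C.map (Int.castRingHom ℝ) * DualSS.mat bL) i t) with hw
    have hmatw : DualSS.mat w = C.map (Int.castRingHom ℝ) * DualSS.mat bL := by
      ext i t; rfl
    have hwmem : ∀ i, w i ∈ L := fun i => hrowmem m C i
    have hwind : LinearIndependent ℝ w := by
      rw [Fintype.linearIndependent_iff]
      intro gc hsum i
      have h2 : Matrix.vecMul gc (C.map (Int.castRingHom ℝ) * DualSS.mat bL) = 0 := by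
        funext t
        have h3 : (∑ i, gc i • w i) t = (0 : EuclideanSpace ℝ (Fin n)) t := by rw [hsum]
        rw [DualSS.sum_smul_apply] at h3
        simpa [Matrix.vecMul, dotProduct, hw] using h3
      exact congrFun (hCind gc h2) i
    have hslope := hLs m hm w hwmem hwind
    have hCPd : ((C.map (Int.castRingHom ℝ) * DualSS.mat bL) *
        (C.map (Int.castRingHom ℝ) * DualSS.mat bL)ᵀ).PosDef :=
      DualSS.gram_posdef_of_rows _ hCind
    unfold latticeSlope at hslope
    rw [DualSS.gram_eq w, DualSS.gram_eq bL, hmatw] at hslope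
    exact (DualSS.slope_det_iff hCPd.det_pos hPd.det_pos hm hn).mp hslope
  have key := DualSS.key_ineq hk hkn (DualSS.mat bL) (DualSS.mat v) hPd hVd (Matrix.of Af) hA hsemi
  -- dual lattice determinant
  have hmemD : ∀ i, bD i ∈ D := fun i => hDspan ▸ Submodule.subset_span ⟨i, rfl⟩
  choose Mf hMf using fun (i : Fin n) => hpair (bD i) (hmemD i)
  have hMQ : (Matrix.of Mf).map (Int.castRingHom ℝ) = DualSS.mat bD * (DualSS.mat bL)ᵀ := by
    ext i j
    simp only [Matrix.map_apply, Matrix.of_apply, Int.coe_castRingHom]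
    rw [← hMf i j, DualSS.inner_euc]
    simp [Matrix.mul_apply, DualSS.mat]
  have hdP : IsUnit (DualSS.mat bL).det := DualSS.isUnit_det_of_gram hPd
  have hdPT : IsUnit (DualSS.mat bL)ᵀ.det := by rwa [Matrix.det_transpose]
  have hRP : ((DualSS.mat bL)ᵀ)⁻¹ * (DualSS.mat bL)ᵀ = 1 := Matrix.nonsing_inv_mul _ hdPT
  have hrD : ∀ i, (WithLp.toLp 2 (fun t => ((DualSS.mat bL)ᵀ)⁻¹ i t) : EuclideanSpace ℝ (Fin n)) ∈ D := by
    intro i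
    rw [hD]
    intro l hl
    rw [hL] at hl
    obtain ⟨c, hc⟩ := (Submodule.mem_span_range_iff_exists_fun ℤ).mp hl
    refine ⟨c i, ?_⟩
    rw [DualSS.inner_euc]
    have hlt : ∀ t, l t = ∑ j, (c j : ℝ) * DualSS.mat bL j t := by
      intro t
      rw [← hc]
      have h1 : ∀ j, (c j) • bL j = ((c j : ℝ)) • bL j :=
        fun j => (Int.cast_smul_eq_zsmul ℝ _ _).symm
      rw [Finset.sum_congr rfl (fun j _ => h1 j), DualSS.sum_smul_apply]
      rfl
    calc ∑ t, ((DualSS.mat bL)ᵀ)⁻¹ i t * l t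
        = ∑ t, ∑ j, ((DualSS.mat bL)ᵀ)⁻¹ i t * ((c j : ℝ) * DualSS.mat bL j t) := by
          refine Finset.sum_congr rfl fun t _ => ?_
          rw [hlt t, Finset.mul_sum]
    _ = ∑ j, ∑ t, ((DualSS.mat bL)ᵀ)⁻¹ i t * ((c j : ℝ) * DualSS.mat bL j t) :=
          Finset.sum_comm
    _ = ∑ j, (c j : ℝ) * (((DualSS.mat bL)ᵀ)⁻¹ * (DualSS.mat bL)ᵀ) i j := by
          refine Finset.sum_congr rfl fun j _ => ?_
          rw [Matrix.mul_apply, Finset.mul_sum]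
          refine Finset.sum_congr rfl fun t _ => ?_
          rw [Matrix.transpose_apply]; ring
    _ = (c i : ℝ) := by
          rw [hRP]
          simp [Matrix.one_apply]
  choose Nf hNf using fun (i : Fin n) =>
    (Submodule.mem_span_range_iff_exists_fun ℤ).mp (hDspan ▸ hrD i)
  have hNR : (Matrix.of Nf).map (Int.castRingHom ℝ) * DualSS.mat bD = ((DualSS.mat bL)ᵀ)⁻¹ := by
    ext i t
    have h5 := congrArg (fun x : EuclideanSpace ℝ (Fin n) => x t) (hNf i)
    simp only [PiLp.toLp_apply] at h5
    have h1 : ∀ j, (Nf i j) • bD j = ((Nf i j : ℝ)) • bD j :=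
      fun j => (Int.cast_smul_eq_zsmul ℝ _ _).symm
    rw [Finset.sum_congr rfl (fun j _ => h1 j), DualSS.sum_smul_apply] at h5
    rw [Matrix.mul_apply]
    rw [← h5]
    simp [Matrix.map_apply, DualSS.mat]
  have hQmeq : DualSS.mat bD = (Matrix.of Mf).map (Int.castRingHom ℝ) * ((DualSS.mat bL)ᵀ)⁻¹ := by
    rw [hMQ, Matrix.mul_nonsing_inv_cancel_right _ _ hdPT]
  have hNM : (Matrix.of Nf).map (Int.castRingHom ℝ) * ((Matrix.of Mf).map (Int.castRingHom ℝ)) = 1 := by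
    have h6 : (Matrix.of Nf).map (Int.castRingHom ℝ) *
        ((Matrix.of Mf).map (Int.castRingHom ℝ) * ((DualSS.mat bL)ᵀ)⁻¹) = ((DualSS.mat bL)ᵀ)⁻¹ := by
      rw [← hQmeq, hNR]
    calc (Matrix.of Nf).map (Int.castRingHom ℝ) * ((Matrix.of Mf).map (Int.castRingHom ℝ))
        = (Matrix.of Nf).map (Int.castRingHom ℝ) *
            ((Matrix.of Mf).map (Int.castRingHom ℝ) * (((DualSS.mat bL)ᵀ)⁻¹ * (DualSS.mat bL)ᵀ)) := by
          rw [hRP, Matrix.mul_one]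
    _ = ((Matrix.of Nf).map (Int.castRingHom ℝ) *
            ((Matrix.of Mf).map (Int.castRingHom ℝ) * ((DualSS.mat bL)ᵀ)⁻¹)) * (DualSS.mat bL)ᵀ := by
          simp only [Matrix.mul_assoc]
    _ = ((DualSS.mat bL)ᵀ)⁻¹ * (DualSS.mat bL)ᵀ := by rw [h6]
    _ = 1 := hRP
  have hdMN : ((Matrix.of Mf).det * (Matrix.of Nf).det : ℤ) = 1 := by
    have h8 := congrArg Matrix.det hNM
    rw [Matrix.det_mul, Matrix.det_one, ← RingHom.mapMatrix_apply, ← RingHom.map_det,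
      ← RingHom.mapMatrix_apply, ← RingHom.map_det] at h8
    simp only [Int.coe_castRingHom] at h8
    have h10 : ((Matrix.of Nf).det * (Matrix.of Mf).det : ℤ) = 1 := by exact_mod_cast h8
    rw [mul_comm] at h10
    exact h10
  have hM2 : (((Matrix.of Mf).map (Int.castRingHom ℝ)).det) ^ 2 = 1 := by
    rw [← RingHom.mapMatrix_apply, ← RingHom.map_det]
    rcases Int.isUnit_iff.mp (IsUnit.of_mul_eq_one _ hdMN) with h | h <;>
      simp [h]
  have hdpos : 0 < (DualSS.mat bL * (DualSS.mat bL)ᵀ).det := hPd.det_pos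
  have hPP2 : (DualSS.mat bL * (DualSS.mat bL)ᵀ).det
      = (DualSS.mat bL).det * (DualSS.mat bL).det := by
    rw [Matrix.det_mul, Matrix.det_transpose]
  have hQQP : (DualSS.mat bD * (DualSS.mat bD)ᵀ).det * (DualSS.mat bL * (DualSS.mat bL)ᵀ).det = 1 := by
    have h9 : DualSS.mat bD * (DualSS.mat bD)ᵀ
        = (Matrix.of Mf).map (Int.castRingHom ℝ) *
          (((DualSS.mat bL)ᵀ)⁻¹ * (((DualSS.mat bL)ᵀ)⁻¹)ᵀ *
            ((Matrix.of Mf).map (Int.castRingHom ℝ))ᵀ) := by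
      rw [hQmeq]
      simp only [Matrix.transpose_mul, Matrix.mul_assoc]
    rw [h9, hPP2]
    rw [Matrix.det_mul, Matrix.det_mul, Matrix.det_mul, Matrix.det_transpose,
      Matrix.det_transpose, Matrix.det_nonsing_inv, Ring.inverse_eq_inv', Matrix.det_transpose]
    have hp0 : (DualSS.mat bL).det ≠ 0 := by
      intro h0; rw [hPP2, h0, mul_zero] at hdpos; exact lt_irrefl _ hdpos
    set mc := ((Matrix.of Mf).map (Int.castRingHom ℝ)).det with hmc
    set p := (DualSS.mat bL).det with hp
    field_simp
    nlinarith [hM2]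
  have hQdet_eq : (DualSS.mat bD * (DualSS.mat bD)ᵀ).det
      = ((DualSS.mat bL * (DualSS.mat bL)ᵀ).det)⁻¹ := by
    exact eq_inv_of_mul_eq_one_right (by rw [mul_comm] at hQQP; exact hQQP)
  -- final slope comparison
  unfold latticeSlope
  rw [show gramMatrix v = DualSS.mat v * (DualSS.mat v)ᵀ from DualSS.gram_eq v,
    show gramMatrix bD = DualSS.mat bD * (DualSS.mat bD)ᵀ from DualSS.gram_eq bD]
  apply (DualSS.slope_det_iff hVd.det_pos hQd.det_pos hk hn).mpr
  rw [hQdet_eq, inv_pow]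
  have h10 : 0 < (DualSS.mat bL * (DualSS.mat bL)ᵀ).det ^ k := pow_pos hdpos k
  calc ((DualSS.mat bL * (DualSS.mat bL)ᵀ).det ^ k)⁻¹
      = ((DualSS.mat bL * (DualSS.mat bL)ᵀ).det ^ k)⁻¹ * 1 := (mul_one _).symm
  _ ≤ ((DualSS.mat bL * (DualSS.mat bL)ᵀ).det ^ k)⁻¹ *
        ((DualSS.mat v * (DualSS.mat v)ᵀ).det ^ n *
          (DualSS.mat bL * (DualSS.mat bL)ᵀ).det ^ k) :=
      mul_le_mul_of_nonneg_left key (inv_nonneg.mpr h10.le)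
  _ = (DualSS.mat v * (DualSS.mat v)ᵀ).det ^ n := by
      rw [mul_comm ((DualSS.mat v * (DualSS.mat v)ᵀ).det ^ n), ← mul_assoc,
        inv_mul_cancel₀ h10.ne', one_mul]
end
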